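/- arXiv:2503.05177 — 6 statements merged into one kernel-verified Lean document; each statement's English description precedes it below -/
import Mathlib

section
/- Let {X_i}_{i≥1} be independent, identically distributed random variables with values in the positive integers whose common distribution has support with greatest common divisor 1 and satisfies E[X] < 2, and let W_n = X_1 + ... + X_n. Then almost surely the sequence {W_n}_{n≥1} is asymptotically 2-complete, i.e., almost surely every sufficiently large positive integer can be written as W_i + W_j for some i ≠ j. -/
/-!
By the strong law of large numbers `W n / n → E[X] < 2` almost surely, so for every large `m`
more than `m / 2` of the weights lie in `(0, m)`. Sorting these weights into the `m / 2` classes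
`{a, m - a}` forces two distinct weights into one class, and those two sum to `m`.
-/

open MeasureTheory ProbabilityTheory Filter Topology Finset

theorem Finset.exists_ne_add_eq_of_lt_two_mul_card {A : Finset ℕ} {m : ℕ}
    (hA : A ⊆ Ioo 0 m) (hcard : m < 2 * #A) :
    ∃ a ∈ A, ∃ b ∈ A, a ≠ b ∧ a + b = m := by
  have hmaps : Set.MapsTo (fun a => min a (m - a)) A (Icc 1 (m / 2)) := by
    intro a ha
    have := mem_Ioo.mp (hA ha)
    simp only [coe_Icc, Set.mem_Icc]
    omega
  obtain ⟨a, ha, b, hb, hab, hmin⟩ :=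
    exists_ne_map_eq_of_card_lt_of_maps_to (by rw [Nat.card_Icc]; omega) hmaps
  have := mem_Ioo.mp (hA ha)
  have := mem_Ioo.mp (hA hb)
  exact ⟨a, ha, b, hb, hab, by omega⟩

theorem StrictMono.eventually_exists_add_eq {w : ℕ → ℕ} (hw : StrictMono w)
    (hdense : ∀ᶠ n in atTop, w n + 2 < 2 * n) :
    ∀ᶠ m in atTop, ∃ i j : ℕ, 1 ≤ i ∧ 1 ≤ j ∧ i ≠ j ∧ w i + w j = m := by
  obtain ⟨n₀, hn₀⟩ := eventually_atTop.mp hdense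
  filter_upwards [eventually_ge_atTop (2 * n₀)] with m hm
  set n := m / 2 + 1
  have hwn : w n + 2 < 2 * n := hn₀ n (by omega)
  have hsub : (Icc 1 n).image w ⊆ Ioo 0 m := by
    intro a ha
    obtain ⟨i, hi, rfl⟩ := mem_image.mp ha
    obtain ⟨hi1, hin⟩ := mem_Icc.mp hi
    have := hw (Nat.lt_of_succ_le hi1)
    have := hw.monotone hin
    rw [mem_Ioo]
    omega
  have hcard : m < 2 * #((Icc 1 n).image w) := by
    rw [card_image_of_injective _ hw.injective, Nat.card_Icc]
    omega
  obtain ⟨a, ha, b, hb, hab, rfl⟩ := exists_ne_add_eq_of_lt_two_mul_card hsub hcard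
  obtain ⟨i, hi, rfl⟩ := mem_image.mp ha
  obtain ⟨j, hj, rfl⟩ := mem_image.mp hb
  exact ⟨i, j, (mem_Icc.mp hi).1, (mem_Icc.mp hj).1, fun h => hab (h ▸ rfl), rfl⟩

theorem eventually_add_two_lt_two_mul {w : ℕ → ℕ} {E : ℝ}
    (hlim : Tendsto (fun n => (w n : ℝ) / n) atTop (𝓝 E)) (hE : E < 2) :
    ∀ᶠ n in atTop, w n + 2 < 2 * n := by
  have hlim' : Tendsto (fun n : ℕ => (w n : ℝ) / n + 2 / n) atTop (𝓝 E) := by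
    simpa using hlim.add (tendsto_const_div_atTop_nhds_zero_nat 2)
  filter_upwards [hlim'.eventually_lt_const hE, eventually_gt_atTop 0] with n hn hpos
  have hpos' : (0 : ℝ) < n := Nat.cast_pos.mpr hpos
  rw [← add_div, div_lt_iff₀ hpos'] at hn
  exact_mod_cast hn

theorem strictMono_sum_Icc_of_pos {f : ℕ → ℕ} (hf : ∀ i, 0 < f i) :
    StrictMono fun n => ∑ i ∈ Icc 1 n, f i :=
  strictMono_nat_of_lt_succ fun n => by
    rw [sum_Icc_succ_top (Nat.le_add_left 1 n)]
    exact Nat.lt_add_of_pos_right (hf (n + 1))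

theorem strong_law_ae_real_Icc {Ω : Type*} [MeasurableSpace Ω] {μ : Measure Ω}
    (Y : ℕ → Ω → ℝ) (hint : Integrable (Y 1) μ)
    (hindep : Pairwise (Function.onFun (· ⟂ᵢ[μ] ·) Y))
    (hident : ∀ i, 1 ≤ i → IdentDistrib (Y i) (Y 1) μ μ) :
    ∀ᵐ ω ∂μ,
      Tendsto (fun n : ℕ => (∑ i ∈ Icc 1 n, Y i ω) / n) atTop (𝓝 μ[Y 1]) := by
  have hslln := strong_law_ae_real (fun i => Y (i + 1)) hint
    (fun i j hij => hindep (by omega)) (fun i => hident (i + 1) (Nat.le_add_left 1 i))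
  filter_upwards [hslln] with ω hω
  convert hω using 3 with n
  rw [← Ico_add_one_right_eq_Icc, sum_Ico_eq_sum_range, Nat.add_sub_cancel]
  simp only [add_comm 1]

theorem stmt3_general
    {Ω : Type*} [MeasurableSpace Ω] (μ : Measure Ω)
    (X : ℕ → Ω → ℕ)
    (hpos : ∀ i ω, 0 < X i ω)
    (hindep : iIndepFun X μ)
    (hident : ∀ i, IdentDistrib (X i) (X 1) μ μ)
    (hint : Integrable (fun ω => (X 1 ω : ℝ)) μ)
    (hmean : (∫ ω, (X 1 ω : ℝ) ∂μ) < 2)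
    (W : ℕ → Ω → ℕ)
    (hW : ∀ n ω, W n ω = ∑ i ∈ Finset.Icc 1 n, X i ω) :
    ∀ᵐ ω ∂μ, ∃ N : ℕ, ∀ m : ℕ, N ≤ m →
      ∃ i j : ℕ, 1 ≤ i ∧ 1 ≤ j ∧ i ≠ j ∧ W i ω + W j ω = m := by
  have hcast : Measurable (Nat.cast : ℕ → ℝ) := measurable_from_top
  have hslln := strong_law_ae_real_Icc (fun i ω => (X i ω : ℝ)) hint
    (fun i j hij => (hindep.indepFun hij).comp hcast hcast)
    (fun i _ => (hident i).comp hcast)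
  filter_upwards [hslln] with ω hω
  have hmono : StrictMono (W · ω) := by
    simpa only [hW] using strictMono_sum_Icc_of_pos (hpos · ω)
  have hlim :
      Tendsto (fun n => (W n ω : ℝ) / n) atTop (𝓝 (∫ ω, (X 1 ω : ℝ) ∂μ)) := by
    simpa only [hW, Nat.cast_sum] using hω
  exact eventually_atTop.mp <|
    hmono.eventually_exists_add_eq (eventually_add_two_lt_two_mul hlim hmean)

/-- If the i.i.d. positive integer gaps have support with gcd 1 and expectation
strictly less than `2`, then almost surely the weight sequence is asymptotically
2-complete: every sufficiently large integer is the sum of two distinct weights. -/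
theorem stmt3
    {Ω : Type*} [MeasurableSpace Ω] (μ : Measure Ω) [IsProbabilityMeasure μ]
    (X : ℕ → Ω → ℕ)
    (hmeas : ∀ i, Measurable (X i))
    (hpos : ∀ i ω, 0 < X i ω)
    (hindep : iIndepFun X μ)
    (hident : ∀ i, IdentDistrib (X i) (X 1) μ μ)
    (hgcd : ∀ d : ℕ, (∀ x : ℕ, μ {ω | X 1 ω = x} ≠ 0 → d ∣ x) → d = 1)
    (hint : Integrable (fun ω => (X 1 ω : ℝ)) μ)
    (hmean : (∫ ω, (X 1 ω : ℝ) ∂μ) < 2)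
    (W : ℕ → Ω → ℕ)
    (hW : ∀ n ω, W n ω = ∑ i ∈ Finset.Icc 1 n, X i ω) :
    ∀ᵐ ω ∂μ, ∃ N : ℕ, ∀ m : ℕ, N ≤ m →
      ∃ i j : ℕ, 1 ≤ i ∧ 1 ≤ j ∧ i ≠ j ∧ W i ω + W j ω = m :=
  stmt3_general μ X hpos hindep hident hint hmean W hW
end

section
/- Let k ≥ 1 be an integer and let {X_i}_{i≥1} be independent, identically distributed random variables with values in the positive integers such that E[X^{1/k}] = ∞, and let W_n = X_1 + ... + X_n. Then the probability that the sequence {W_n}_{n≥1} is asymptotically k-complete is 0. -/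
/-!
If the sums of `k` distinct weights cover every integer from `N` on, then counting the `k`-subsets
of `{1, …, n}` gives `W n ≤ n ^ k + N`, and representing `k W n + 1` forces `W (n+1) ≤ k W n + 1`.
Hence every gap `X (n+1)` is eventually at most a constant times `(n+1) ^ k`. But `E[X ^ (1/k)] = ∞`
makes `∑ P(X > (L n) ^ k)` diverge for every `L`, so by the second Borel–Cantelli lemma the gaps
exceed such a bound infinitely often almost surely.
-/

open MeasureTheory ProbabilityTheory Filter Finset
open scoped ENNReal

def IsAsympCompleteFrom (k N : ℕ) (w : ℕ → ℕ) : Prop :=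
  ∀ m, N ≤ m → ∃ s : Finset ℕ, s.card = k ∧ (∀ i ∈ s, 1 ≤ i) ∧ ∑ i ∈ s, w i = m

namespace IsAsympCompleteFrom

variable {k N : ℕ} {w : ℕ → ℕ}

theorem le_pow_add (h : IsAsympCompleteFrom k N w) (hw : StrictMono w) (n : ℕ) :
    w n ≤ n ^ k + N := by
  have hsub : Icc N (w n) ⊆ ((Icc 1 n).powersetCard k).image (fun s => ∑ i ∈ s, w i) := by
    intro m hm
    obtain ⟨hNm, hmn⟩ := mem_Icc.1 hm
    obtain ⟨s, hcard, hpos, rfl⟩ := h m hNm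
    refine mem_image.2 ⟨s, mem_powersetCard.2 ⟨fun i hi => mem_Icc.2 ⟨hpos i hi, ?_⟩, hcard⟩, rfl⟩
    exact hw.le_iff_le.1 ((single_le_sum (fun j _ => Nat.zero_le (w j)) hi).trans hmn)
  have hcard := (card_le_card hsub).trans card_image_le
  rw [Nat.card_Icc, card_powersetCard, Nat.card_Icc, Nat.add_sub_cancel] at hcard
  have := Nat.choose_le_pow n k
  omega

theorem succ_le_mul_add_one (h : IsAsympCompleteFrom k N w) (hw : Monotone w) {n : ℕ}
    (hn : N ≤ k * w n + 1) : w (n + 1) ≤ k * w n + 1 := by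
  obtain ⟨s, hcard, -, hsum⟩ := h _ hn
  by_cases hs : ∀ i ∈ s, i ≤ n
  · have := sum_le_card_nsmul s w (w n) fun i hi => hw (hs i hi)
    rw [hcard, hsum, smul_eq_mul] at this
    omega
  · push Not at hs
    obtain ⟨j, hj, hnj⟩ := hs
    calc w (n + 1) ≤ w j := hw hnj
      _ ≤ ∑ i ∈ s, w i := single_le_sum (fun i _ => Nat.zero_le (w i)) hj
      _ = k * w n + 1 := hsum

theorem succ_le_add (h : IsAsympCompleteFrom k N w) (hw : StrictMono w) (hk : 1 ≤ k) {n : ℕ}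
    (hn : N ≤ w n) (hpos : 0 < w n) : w (n + 1) ≤ w n + k * (n ^ k + N) := by
  have hkw : w n ≤ k * w n := Nat.le_mul_of_pos_left _ hk
  have hsucc := h.succ_le_mul_add_one hw.monotone (n := n) (by omega)
  have hle := Nat.mul_le_mul_left k (h.le_pow_add hw n)
  omega

theorem eventually_le_pow {x : ℕ → ℕ}
    (h : IsAsympCompleteFrom k N fun n => ∑ i ∈ Icc 1 n, x i) (hk : 1 ≤ k) (hx : ∀ i, 0 < x i) :
    ∀ᶠ n in atTop, x n ≤ (k * (N + 1) * n) ^ k := by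
  set w : ℕ → ℕ := fun n => ∑ i ∈ Icc 1 n, x i
  have hsucc : ∀ n, w (n + 1) = w n + x (n + 1) := fun n =>
    sum_Icc_succ_top (Nat.le_add_left 1 n) x
  have hw : StrictMono w := strictMono_nat_of_lt_succ fun n => by
    rw [hsucc]; exact Nat.lt_add_of_pos_right (hx _)
  refine eventually_atTop.2 ⟨max N 1 + 1, fun n hn => ?_⟩
  obtain ⟨m, rfl⟩ : ∃ m, n = m + 1 := ⟨n - 1, by omega⟩
  have hmw : m ≤ w m := hw.id_le m
  have hgap := h.succ_le_add hw hk (n := m) (by omega) (by omega)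
  rw [hsucc] at hgap
  have hL : k * (N + 1) ≤ (k * (N + 1)) ^ k := Nat.le_self_pow (by omega) _
  have hpow : m ^ k ≤ (m + 1) ^ k := Nat.pow_le_pow_left (Nat.le_succ m) k
  have hone : 1 ≤ (m + 1) ^ k := Nat.one_le_pow _ _ m.succ_pos
  calc x (m + 1) ≤ k * (m ^ k + N) := by omega
    _ ≤ k * (N + 1) * (m + 1) ^ k := by
        rw [mul_assoc]; exact Nat.mul_le_mul_left k (by nlinarith)
    _ ≤ (k * (N + 1)) ^ k * (m + 1) ^ k := Nat.mul_le_mul_right _ hL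
    _ = (k * (N + 1) * (m + 1)) ^ k := (mul_pow _ _ _).symm

end IsAsympCompleteFrom

theorem rpow_one_div_le_mul_tsum_indicator {k L : ℕ} (hk : k ≠ 0) (hL : L ≠ 0) (x : ℕ) :
    (x : ℝ≥0∞) ^ ((1 : ℝ) / k) ≤ L * ∑' n : ℕ, {y : ℕ | (L * n) ^ k < y}.indicator 1 x := by
  have hex : ∃ n, x ≤ (L * n) ^ k :=
    ⟨x, (Nat.le_mul_of_pos_left x (Nat.pos_of_ne_zero hL)).trans (Nat.le_self_pow hk _)⟩
  set t := Nat.find hex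
  have hlt : ∀ n, (L * n) ^ k < x ↔ n < t := fun n => by
    rw [← not_le, ← not_le, Nat.find_le_iff]
    refine ⟨fun hn ⟨m, hmn, hm⟩ => hn (hm.trans ?_), fun hn hx => hn ⟨n, le_rfl, hx⟩⟩
    exact Nat.pow_le_pow_left (Nat.mul_le_mul_left L hmn) k
  have hsum : ∑' n : ℕ, {y : ℕ | (L * n) ^ k < y}.indicator (1 : ℕ → ℝ≥0∞) x = t := by
    simp only [Set.indicator_apply, Set.mem_ofPred_eq, hlt, Pi.one_apply]
    rw [tsum_eq_sum (s := range t) (by simp)]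
    simp [← mem_range]
  have hxt : (x : ℝ≥0∞) ≤ ((L * t : ℕ) : ℝ≥0∞) ^ k := by exact_mod_cast Nat.find_spec hex
  rw [hsum, one_div]
  calc (x : ℝ≥0∞) ^ (k : ℝ)⁻¹ ≤ (((L * t : ℕ) : ℝ≥0∞) ^ k) ^ (k : ℝ)⁻¹ :=
        ENNReal.rpow_le_rpow hxt (by positivity)
    _ = L * t := by rw [ENNReal.pow_rpow_inv_natCast hk]; push_cast; rfl

theorem tsum_measure_pow_lt_eq_top {Ω : Type*} [MeasurableSpace Ω] {μ : Measure Ω} {k L : ℕ}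
    (hk : k ≠ 0) (hL : L ≠ 0) {Y : Ω → ℕ} (hY : Measurable Y)
    (hmom : ∫⁻ ω, (Y ω : ℝ≥0∞) ^ ((1 : ℝ) / k) ∂μ = ⊤) :
    ∑' n : ℕ, μ {ω | (L * n) ^ k < Y ω} = ⊤ := by
  have hmeas : ∀ n : ℕ, MeasurableSet {ω | (L * n) ^ k < Y ω} := fun _ => hY measurableSet_Ioi
  have htop : ⊤ ≤ (L : ℝ≥0∞) * ∑' n : ℕ, μ {ω | (L * n) ^ k < Y ω} :=
    calc ⊤ = ∫⁻ ω, (Y ω : ℝ≥0∞) ^ ((1 : ℝ) / k) ∂μ := hmom.symm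
      _ ≤ ∫⁻ ω, L * ∑' n : ℕ, {ω | (L * n) ^ k < Y ω}.indicator 1 ω ∂μ :=
        lintegral_mono fun ω => rpow_one_div_le_mul_tsum_indicator hk hL (Y ω)
      _ = L * ∑' n : ℕ, μ {ω | (L * n) ^ k < Y ω} := by
        rw [lintegral_const_mul' _ _ (ENNReal.natCast_ne_top L),
          lintegral_tsum fun n => (measurable_one.indicator (hmeas n)).aemeasurable]
        simp_rw [lintegral_indicator_one (hmeas _)]
  exact (ENNReal.mul_eq_top.1 (top_le_iff.1 htop)).resolve_right (by simp) |>.2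

theorem iIndepFun.ae_frequently_mem_of_tsum_eq_top {Ω β : Type*} [MeasurableSpace Ω]
    [MeasurableSpace β] {μ : Measure Ω} [IsProbabilityMeasure μ] {X : ℕ → Ω → β}
    (hindep : iIndepFun X μ) (hmeas : ∀ n, Measurable (X n)) {t : ℕ → Set β}
    (ht : ∀ n, MeasurableSet (t n)) (hsum : ∑' n, μ (X n ⁻¹' t n) = ⊤) :
    ∀ᵐ ω ∂μ, ∃ᶠ n in atTop, X n ω ∈ t n := by
  have hs : ∀ n, MeasurableSet (X n ⁻¹' t n) := fun n => hmeas n (ht n)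
  have hset : iIndepSet (fun n => X n ⁻¹' t n) μ :=
    (iIndepSet_iff_meas_biInter hs).2 fun S => hindep.meas_biInter fun i _ => ⟨t i, ht i, rfl⟩
  have hlimsup : ∀ᵐ ω ∂μ, ω ∈ limsup (fun n => X n ⁻¹' t n) atTop :=
    (prob_compl_eq_zero_iff (MeasurableSet.measurableSet_limsup hs)).2
      (measure_limsup_eq_one hs hset hsum)
  exact hlimsup.mono fun ω hω => mem_limsup_iff_frequently_mem.1 hω

/-- If the i.i.d. positive integer gaps satisfy `E[X^(1/k)] = ∞`, then the
probability that the weight sequence is asymptotically `k`-complete is `0`. -/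
theorem stmt4
    {Ω : Type*} [MeasurableSpace Ω] (μ : Measure Ω) [IsProbabilityMeasure μ]
    (k : ℕ) (hk : 1 ≤ k)
    (X : ℕ → Ω → ℕ)
    (hmeas : ∀ i, Measurable (X i))
    (hpos : ∀ i ω, 0 < X i ω)
    (hindep : iIndepFun X μ)
    (hident : ∀ i, IdentDistrib (X i) (X 1) μ μ)
    (hmom : ∫⁻ ω, (X 1 ω : ℝ≥0∞) ^ ((1 : ℝ) / k) ∂μ = ⊤)
    (W : ℕ → Ω → ℕ)
    (hW : ∀ n ω, W n ω = ∑ i ∈ Finset.Icc 1 n, X i ω) :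
    μ {ω | ∃ N : ℕ, ∀ m : ℕ, N ≤ m →
      ∃ s : Finset ℕ, s.card = k ∧ (∀ i ∈ s, 1 ≤ i) ∧ ∑ i ∈ s, W i ω = m} = 0 := by
  obtain rfl : W = fun n ω => ∑ i ∈ Icc 1 n, X i ω := funext₂ hW
  rw [Set.ofPred_exists]
  refine measure_iUnion_null fun N => ?_
  set L := k * (N + 1)
  have hdiv : ∑' n, μ (X n ⁻¹' Set.Ioi ((L * n) ^ k)) = ⊤ := by
    simp_rw [(hident _).measure_mem_eq measurableSet_Ioi]
    exact tsum_measure_pow_lt_eq_top (by omega) (by positivity) (hmeas 1) hmom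
  have hfreq := iIndepFun.ae_frequently_mem_of_tsum_eq_top hindep hmeas
    (fun _ => measurableSet_Ioi) hdiv
  refine measure_mono_null (fun ω hω => ?_) (ae_iff.1 hfreq)
  simp only [Set.mem_ofPred_eq, Set.mem_Ioi, not_frequently, not_lt]
  exact IsAsympCompleteFrom.eventually_le_pow hω hk (hpos · ω)
end

section
/- Let {X_i}_{i≥1} be positive integers, W_n = X_1 + ... + X_n, and fix a positive integer n with W_1 ≤ n. Let T_n = max{i : W_i ≤ n} and, for 1 ≤ i ≤ T_n, let R_i = n - W_{T_n} + X_{T_n} + X_{T_n - 1} + ... + X_{T_n - i + 1}. If n cannot be written as the sum of two distinct elements of {W_m}_{m≥1}, then {W_i : 1 ≤ i ≤ T_n} ∩ {R_i : 1 ≤ i ≤ T_n} ∩ [1, n/3] = ∅. -/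
/-!
Splitting `W T` at `T - i'` shows `R i' = n - W (T - i')`, so a coincidence `W i = R i'` means
`W i + W (T - i') = n`. As `n` has no representation by two distinct weights, either
`T - i' = 0`, giving `W i = n`, or `i = T - i'`, giving `2 W i = n`; both contradict
`1 ≤ W i ≤ n / 3`.
-/

open Finset

theorem sum_Icc_one_sub_add_sum_range_sub {M : Type*} [AddCommMonoid M] (f : ℕ → M)
    {m k : ℕ} (hk : k ≤ m) :
    ∑ i ∈ Icc 1 (m - k), f i + ∑ j ∈ range k, f (m - j) = ∑ i ∈ Icc 1 m, f i := by
  induction k with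
  | zero => simp
  | succ k ih =>
    have hsplit : ∑ i ∈ Icc 1 (m - k), f i = ∑ i ∈ Icc 1 (m - (k + 1)), f i + f (m - k) := by
      rw [show m - k = m - (k + 1) + 1 by omega, sum_Icc_succ_top (by omega)]
    rw [← ih (by omega), hsplit, sum_range_succ]
    abel

theorem stmt6_general
    (X : ℕ → ℕ)
    (W : ℕ → ℕ) (hW : ∀ m, W m = ∑ i ∈ Finset.Icc 1 m, X i)
    (n : ℕ)
    (T : ℕ) (hT₁ : W T ≤ n)
    (R : ℕ → ℕ) (hR : ∀ i, R i = n - W T + ∑ j ∈ Finset.range i, X (T - j))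
    (hnot : ¬ ∃ i j : ℕ, 1 ≤ i ∧ 1 ≤ j ∧ i ≠ j ∧ W i + W j = n) :
    ∀ i ∈ Finset.Icc 1 T, ∀ i' ∈ Finset.Icc 1 T,
      ¬ (W i = R i' ∧ 1 ≤ W i ∧ 3 * W i ≤ n) := by
  intro i hi i' hi' ⟨hWR, hWi_pos, hWi_small⟩
  have hsplit : W (T - i') + ∑ j ∈ range i', X (T - j) = W T := by
    rw [hW, hW]
    exact sum_Icc_one_sub_add_sum_range_sub X (mem_Icc.1 hi').2
  have hsum : W i + W (T - i') = n := by
    rw [hWR, hR]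
    omega
  have hW0 : W 0 = 0 := by simp [hW]
  have hne_zero : T - i' ≠ 0 := fun h => by
    rw [h, hW0] at hsum
    omega
  have hne : i ≠ T - i' := fun h => by
    rw [← h] at hsum
    omega
  exact hnot ⟨i, T - i', (mem_Icc.1 hi).1, Nat.one_le_iff_ne_zero.2 hne_zero, hne, hsum⟩

/-- Deterministic lemma: with positive integer gaps `X`, weights
`W n = X 1 + ⋯ + X n`, a target `n ≥ W 1`, `T = max {i : W i ≤ n}` and
`R i = n - W T + (X T + X (T-1) + ⋯ + X (T-i+1))`, if `n` is not the sum of two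
distinct weights then no common value of the `W i` and `R i'` (for
`1 ≤ i, i' ≤ T`) lies in `[1, n/3]`. -/
theorem stmt6
    (X : ℕ → ℕ) (hpos : ∀ i, 0 < X i)
    (W : ℕ → ℕ) (hW : ∀ m, W m = ∑ i ∈ Finset.Icc 1 m, X i)
    (n : ℕ) (hn : W 1 ≤ n)
    (T : ℕ) (hT₁ : W T ≤ n) (hT₂ : ∀ i, W i ≤ n → i ≤ T)
    (R : ℕ → ℕ) (hR : ∀ i, R i = n - W T + ∑ j ∈ Finset.range i, X (T - j))
    (hnot : ¬ ∃ i j : ℕ, 1 ≤ i ∧ 1 ≤ j ∧ i ≠ j ∧ W i + W j = n) :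
    ∀ i ∈ Finset.Icc 1 T, ∀ i' ∈ Finset.Icc 1 T,
      ¬ (W i = R i' ∧ 1 ≤ W i ∧ 3 * W i ≤ n) :=
  stmt6_general X W hW n T hT₁ R hR hnot
end

section
/- There is an M_0 > 0 such that for every real M ≥ M_0 the following holds. Let {X_i}_{i≥1} be i.i.d. positive-integer-valued random variables with weights W_n = X_1 + ... + X_n, and for a positive integer n let L_n = {max(X_1,...,X_n) ≤ n/M}, T_n = max{i : W_i ≤ n}, R_i = n - W_{T_n} + X_{T_n} + ... + X_{T_n - i + 1} for 1 ≤ i ≤ T_n, and for a nonnegative integer b < n and 1 ≤ i ≤ T_{n-b} let W'_{b,i} = W_{T_{n-b}} - W_{T_{n-b} - i}. Then P({W_i : 1 ≤ i ≤ T_n} ∩ {R_i : 1 ≤ i ≤ T_n} ∩ [1, n/3] = ∅) ≤ (E[X] + 1)·P(L_n^c) + Σ_{b=0}^{⌊n/M⌋} P(X ≥ b+1) · P({W_i : 1 ≤ i ≤ T_{n-b}} ∩ {b + W'_{b,i} : 1 ≤ i ≤ T_{n-b}} ∩ [1, n/3] = ∅ and L_n). -/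
/-!
Split the event `A` on the left according to `Lₙ`. On `A ∩ Lₙ` let `t = Tₙ` be the last renewal
before `n` and `b = n - W t` the remaining distance: then `X (t + 1) > b`, and `b ≤ n / M` because
`X (t + 1) ≤ n / M` when `t < n`. What is left of the constraints is an event `G b t`
(`IsReducedConfig`) not involving `X (t + 1)`, so `P(A ∩ Lₙ) ≤ ∑_b P(X ≥ b + 1) V_b` with
`V_b = ∑_t P(G b t) ≤ 1` (the `G b t` are disjoint in `t`). Splitting
`V_b = P(X > n/M) V_b + P(X ≤ n/M) V_b`, the first part is at most `P(Lₙᶜ)` and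
`∑_b P(X ≥ b + 1) ≤ E X`; in the second, `G b t ∩ {X (t + 1) ≤ n/M}` forces `t = T_{n-b}` and lies
in the `b`-th event on the right-hand side.
-/

open MeasureTheory ProbabilityTheory
open scoped ENNReal

section GapSequences

open Finset

def partialSum (x : ℕ → ℕ) (m : ℕ) : ℕ := ∑ i ∈ Icc 1 m, x i

lemma partialSum_succ (x : ℕ → ℕ) (m : ℕ) :
    partialSum x (m + 1) = partialSum x m + x (m + 1) :=
  sum_Icc_succ_top (Nat.le_add_left 1 m) x

lemma partialSum_congr {x y : ℕ → ℕ} {m : ℕ} (h : ∀ i ∈ Icc 1 m, x i = y i) :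
    partialSum x m = partialSum y m :=
  sum_congr rfl h

lemma partialSum_strictMono {x : ℕ → ℕ} (hx : ∀ i, 0 < x i) : StrictMono (partialSum x) :=
  strictMono_nat_of_lt_succ fun m => by
    rw [partialSum_succ]
    exact Nat.lt_add_of_pos_right (hx _)

lemma partialSum_sub_add_sum_range (x : ℕ → ℕ) {t k : ℕ} (hk : k ≤ t) :
    partialSum x (t - k) + ∑ j ∈ range k, x (t - j) = partialSum x t := by
  induction k with
  | zero => simp
  | succ k ih =>
    have hsucc : t - k = t - (k + 1) + 1 := by omega
    rw [sum_range_succ, ← ih (by omega), hsucc, partialSum_succ]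
    ring

lemma StrictMono.isGreatest_setOf_le_iff {α : Type*} [LinearOrder α] {f : ℕ → α}
    (hf : StrictMono f) {m : α} {t : ℕ} :
    IsGreatest {i | f i ≤ m} t ↔ f t ≤ m ∧ m < f (t + 1) := by
  refine ⟨fun ht => ⟨ht.1, lt_of_not_ge fun h => (ht.2 h).not_gt t.lt_succ_self⟩,
    fun ⟨h₁, h₂⟩ => ⟨h₁, fun i hi => Nat.lt_succ_iff.1 (hf.lt_iff_lt.1 (lt_of_le_of_lt hi h₂))⟩⟩

def NoCommonPoint (n t : ℕ) (u v : ℕ → ℕ) : Prop :=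
  ∀ i ∈ Icc 1 t, ∀ i' ∈ Icc 1 t, ¬ (u i = v i' ∧ 1 ≤ u i ∧ 3 * u i ≤ n)

lemma noCommonPoint_congr {n t : ℕ} {u u' v v' : ℕ → ℕ} (hu : ∀ i ∈ Icc 1 t, u i = u' i)
    (hv : ∀ i ∈ Icc 1 t, v i = v' i) :
    NoCommonPoint n t u v ↔ NoCommonPoint n t u' v' := by
  refine forall₂_congr fun i hi => forall₂_congr fun i' hi' => ?_
  rw [hu i hi, hv i' hi']

/-- `b + (partialSum x t - partialSum x (t - i))` is `b + W'_{b,i}` once `t = T_{n-b}`. The gap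
`x (t + 1)` is left unconstrained, so that the event is independent of it. -/
def IsReducedConfig (M : ℝ) (n b t : ℕ) (x : ℕ → ℕ) : Prop :=
  partialSum x t + b = n ∧
  NoCommonPoint n t (partialSum x) (fun i => b + (partialSum x t - partialSum x (t - i))) ∧
  ∀ i ∈ Icc 1 n, i ≠ t + 1 → (x i : ℝ) ≤ n / M

lemma isReducedConfig_dependsOn (M : ℝ) (n b t : ℕ) :
    DependsOn (IsReducedConfig M n b t) ↑((Icc 1 (max t n)).erase (t + 1)) := by
  intro x y hxy
  have hsum : ∀ m ≤ t, partialSum x m = partialSum y m := fun m hm =>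
    partialSum_congr fun i hi => hxy i (by simp only [mem_coe, mem_erase, mem_Icc] at hi ⊢; omega)
  have hgap : ∀ i ∈ Icc 1 n, i ≠ t + 1 → x i = y i := fun i hi hne =>
    hxy i (by simp only [mem_coe, mem_erase, mem_Icc] at hi ⊢; omega)
  refine propext (and_congr (by rw [hsum t le_rfl]) (and_congr ?_ ?_))
  · refine noCommonPoint_congr (fun i hi => hsum i (mem_Icc.1 hi).2) fun i _ => ?_
    rw [hsum t le_rfl, hsum (t - i) (Nat.sub_le t i)]
  · exact forall₂_congr fun i hi => imp_congr_right fun hne => by rw [hgap i hi hne]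

section

variable {M : ℝ} {n t : ℕ} {x : ℕ → ℕ}

lemma le_of_isGreatest_partialSum (hx : ∀ i, 0 < x i)
    (ht : IsGreatest {i | partialSum x i ≤ n} t) : t ≤ n :=
  ((partialSum_strictMono hx).id_le t).trans ht.1

lemma sub_partialSum_lt (ht : IsGreatest {i | partialSum x i ≤ n} t) :
    n - partialSum x t < x (t + 1) := by
  have h₁ : partialSum x t ≤ n := ht.1
  have h₂ : n < partialSum x (t + 1) := lt_of_not_ge fun h => (ht.2 h).not_gt t.lt_succ_self
  rw [partialSum_succ] at h₂
  omega

lemma sub_partialSum_le_floor (hx : ∀ i, 0 < x i) (ht : IsGreatest {i | partialSum x i ≤ n} t)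
    (hsmall : ∀ i ∈ Icc 1 n, (x i : ℝ) ≤ n / M) :
    n - partialSum x t ≤ ⌊(n : ℝ) / M⌋₊ := by
  rcases (le_of_isGreatest_partialSum hx ht).eq_or_lt with rfl | htn
  · have : t ≤ partialSum x t := (partialSum_strictMono hx).id_le t
    have : partialSum x t ≤ t := ht.1
    omega
  · refine Nat.le_floor ?_
    have hlast : ((n - partialSum x t + 1 : ℕ) : ℝ) ≤ x (t + 1) :=
      Nat.cast_le.2 (sub_partialSum_lt ht)
    have := hsmall (t + 1) (mem_Icc.2 ⟨le_add_self, htn⟩)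
    push_cast at hlast
    linarith

-- With `b = n - W t`, `R i = b + (W t - W (t - i))`.
lemma isReducedConfig_of_isGreatest (ht : IsGreatest {i | partialSum x i ≤ n} t)
    (hA : NoCommonPoint n t (partialSum x)
      (fun i => n - partialSum x t + ∑ j ∈ range i, x (t - j)))
    (hsmall : ∀ i ∈ Icc 1 n, (x i : ℝ) ≤ n / M) :
    IsReducedConfig M n (n - partialSum x t) t x := by
  have hle : partialSum x t ≤ n := ht.1
  refine ⟨by omega, (noCommonPoint_congr (fun _ _ => rfl) fun i hi => ?_).1 hA,
    fun i hi _ => hsmall i hi⟩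
  have := partialSum_sub_add_sum_range x (mem_Icc.1 hi).2
  omega

lemma IsReducedConfig.isGreatest {b : ℕ} (hx : ∀ i, 0 < x i) (h : IsReducedConfig M n b t x) :
    IsGreatest {i | partialSum x i ≤ n - b} t := by
  have := h.1
  have := hx (t + 1)
  refine (partialSum_strictMono hx).isGreatest_setOf_le_iff.2 ⟨by omega, ?_⟩
  rw [partialSum_succ]
  omega

lemma IsReducedConfig.unique {b t' : ℕ} (hx : ∀ i, 0 < x i) (h : IsReducedConfig M n b t x)
    (h' : IsReducedConfig M n b t' x) : t = t' :=
  (partialSum_strictMono hx).injective (by have := h.1; have := h'.1; omega)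

end

end GapSequences

section Probability

open Finset

variable {Ω : Type*} [MeasurableSpace Ω] {μ : Measure Ω}

section DependsOn

variable {ι β : Type*} [MeasurableSpace β] [Countable β] [MeasurableSingletonClass β]
  {X : ι → Ω → β} {P : (ι → β) → Prop} {S : Finset ι}

lemma measurableSet_setOf_of_dependsOn (hX : ∀ i, Measurable (X i)) (hP : DependsOn P S) :
    MeasurableSet {ω | P fun i => X i ω} := by
  obtain ⟨g, rfl⟩ := dependsOn_iff_exists_comp.1 hP
  exact measurable_pi_lambda (fun ω (i : S) => X i ω) (fun i => hX i)
    (Set.to_countable {v | g v}).measurableSet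

lemma measure_setOf_inter_preimage_eq_mul (hX : ∀ i, Measurable (X i)) (hindep : iIndepFun X μ)
    (hP : DependsOn P S) {k : ι} (hk : k ∉ S) {s : Set β} (hs : MeasurableSet s) :
    μ ({ω | P fun i => X i ω} ∩ X k ⁻¹' s) = μ {ω | P fun i => X i ω} * μ (X k ⁻¹' s) := by
  obtain ⟨g, rfl⟩ := dependsOn_iff_exists_comp.1 hP
  exact (hindep.indepFun_finset S {k} (disjoint_singleton_right.2 hk) hX).measure_inter_preimage_eq_mul
    {v | g v} {v | v ⟨k, mem_singleton_self k⟩ ∈ s} (Set.to_countable _).measurableSet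
    (measurable_pi_apply _ hs)

end DependsOn

lemma sum_measure_add_one_le_le_lintegral {Y : Ω → ℕ} (hY : Measurable Y) (N : ℕ) :
    ∑ b ∈ range N, μ {ω | b + 1 ≤ Y ω} ≤ ∫⁻ ω, (Y ω : ℝ≥0∞) ∂μ := by
  have hmeas : ∀ b : ℕ, MeasurableSet {ω | b + 1 ≤ Y ω} := fun b => hY .of_discrete
  calc ∑ b ∈ range N, μ {ω | b + 1 ≤ Y ω}
      = ∫⁻ ω, ∑ b ∈ range N, {ω | b + 1 ≤ Y ω}.indicator 1 ω ∂μ := by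
        rw [lintegral_finsetSum _ fun b _ => measurable_one.indicator (hmeas b)]
        exact sum_congr rfl fun b _ => (lintegral_indicator_one (hmeas b)).symm
    _ ≤ ∫⁻ ω, (Y ω : ℝ≥0∞) ∂μ := lintegral_mono fun ω => by
        simp only [Set.indicator_apply, Set.mem_ofPred_eq, Pi.one_apply, sum_boole]
        have : (range N).filter (fun b => b + 1 ≤ Y ω) ⊆ range (Y ω) := fun b hb => by
          simp only [mem_filter, mem_range] at hb ⊢
          omega
        exact_mod_cast (card_le_card this).trans_eq (card_range _)

end Probability

lemma ENNReal.sum_mul_le_of_mul_le {ι : Type*} {s : Finset ι} {q V a : ι → ℝ≥0∞}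
    {p c E : ℝ≥0∞} (hp : p ≤ 1) (hV : ∀ b ∈ s, V b ≤ 1) (ha : ∀ b ∈ s, p * V b ≤ a b)
    (hq : ∑ b ∈ s, q b ≤ E) (hc : 1 - p ≤ c) :
    ∑ b ∈ s, q b * V b ≤ E * c + ∑ b ∈ s, q b * a b := by
  have hVb : ∀ b ∈ s, V b ≤ c + a b := fun b hb => calc
    V b = (1 - p) * V b + p * V b := by rw [← add_mul, tsub_add_cancel_of_le hp, one_mul]
    _ ≤ c * 1 + a b := add_le_add (mul_le_mul' hc (hV b hb)) (ha b hb)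
    _ = c + a b := by rw [mul_one]
  calc ∑ b ∈ s, q b * V b ≤ ∑ b ∈ s, q b * (c + a b) :=
        Finset.sum_le_sum fun b hb => mul_le_mul_right (hVb b hb) _
    _ = (∑ b ∈ s, q b) * c + ∑ b ∈ s, q b * a b := by
        simp only [mul_add, Finset.sum_add_distrib, Finset.sum_mul]
    _ ≤ E * c + ∑ b ∈ s, q b * a b := add_le_add_left (mul_le_mul' hq le_rfl) _

section Renewal

open Finset

variable {Ω : Type*} {X : ℕ → Ω → ℕ} (M : ℝ) (n : ℕ)

lemma pairwiseDisjoint_setOf_isReducedConfig (hXpos : ∀ i ω, 0 < X i ω) (b : ℕ) (s : Set ℕ) :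
    s.PairwiseDisjoint fun t => {ω | IsReducedConfig M n b t fun i => X i ω} :=
  fun _ _ _ _ hne => Set.disjoint_left.2 fun ω h h' => hne (h.unique (hXpos · ω) h')

variable [MeasurableSpace Ω] {μ : Measure Ω}

lemma sum_measure_isReducedConfig_le_one [IsProbabilityMeasure μ] (hX : ∀ i, Measurable (X i))
    (hXpos : ∀ i ω, 0 < X i ω) (b N : ℕ) :
    ∑ t ∈ range N, μ {ω | IsReducedConfig M n b t fun i => X i ω} ≤ 1 := by
  rw [← measure_biUnion_finset (pairwiseDisjoint_setOf_isReducedConfig M n hXpos b _)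
    fun t _ => measurableSet_setOf_of_dependsOn hX (isReducedConfig_dependsOn M n b t)]
  exact prob_le_one

variable {M n}

lemma measure_inter_isReducedConfig_preimage (hX : ∀ i, Measurable (X i))
    (hindep : iIndepFun X μ) (hid : ∀ i, IdentDistrib (X i) (X 1) μ μ) (b t : ℕ) (s : Set ℕ) :
    μ ({ω | IsReducedConfig M n b t fun i => X i ω} ∩ X (t + 1) ⁻¹' s)
      = μ (X 1 ⁻¹' s) * μ {ω | IsReducedConfig M n b t fun i => X i ω} := by
  rw [measure_setOf_inter_preimage_eq_mul hX hindep (isReducedConfig_dependsOn M n b t)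
    (notMem_erase _ _) .of_discrete, (hid (t + 1)).measure_mem_eq .of_discrete, mul_comm]

lemma measure_noCommonPoint_inter_le (hX : ∀ i, Measurable (X i)) (hXpos : ∀ i ω, 0 < X i ω)
    (hindep : iIndepFun X μ) (hid : ∀ i, IdentDistrib (X i) (X 1) μ μ) {T : Ω → ℕ}
    (hT : ∀ ω, IsGreatest {i | partialSum (X · ω) i ≤ n} (T ω)) :
    μ ({ω | NoCommonPoint n (T ω) (partialSum (X · ω))
          (fun i => n - partialSum (X · ω) (T ω) + ∑ j ∈ range i, X (T ω - j) ω)}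
        ∩ {ω | ∀ i ∈ Icc 1 n, (X i ω : ℝ) ≤ n / M})
      ≤ ∑ b ∈ range (⌊(n : ℝ) / M⌋₊ + 1), μ {ω | b + 1 ≤ X 1 ω}
          * ∑ t ∈ range (n + 1), μ {ω | IsReducedConfig M n b t fun i => X i ω} := by
  have hcover : {ω | NoCommonPoint n (T ω) (partialSum (X · ω))
        (fun i => n - partialSum (X · ω) (T ω) + ∑ j ∈ range i, X (T ω - j) ω)}
        ∩ {ω | ∀ i ∈ Icc 1 n, (X i ω : ℝ) ≤ n / M}
      ⊆ ⋃ b ∈ range (⌊(n : ℝ) / M⌋₊ + 1), ⋃ t ∈ range (n + 1),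
          {ω | IsReducedConfig M n b t fun i => X i ω} ∩ X (t + 1) ⁻¹' {k | b + 1 ≤ k} := by
    rintro ω ⟨hA, hsmall⟩
    simp only [Set.mem_iUnion]
    exact ⟨_, mem_range_succ_iff.2 (sub_partialSum_le_floor (hXpos · ω) (hT ω) hsmall),
      _, mem_range_succ_iff.2 (le_of_isGreatest_partialSum (hXpos · ω) (hT ω)),
      isReducedConfig_of_isGreatest (hT ω) hA hsmall, sub_partialSum_lt (hT ω)⟩
  calc _ ≤ _ := measure_mono hcover
    _ ≤ ∑ b ∈ range (⌊(n : ℝ) / M⌋₊ + 1), ∑ t ∈ range (n + 1),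
          μ ({ω | IsReducedConfig M n b t fun i => X i ω} ∩ X (t + 1) ⁻¹' {k | b + 1 ≤ k}) :=
        (measure_biUnion_finset_le _ _).trans
          (sum_le_sum fun b _ => measure_biUnion_finset_le _ _)
    _ = _ := by
        simp only [measure_inter_isReducedConfig_preimage hX hindep hid, mul_sum]
        rfl

lemma measure_mul_sum_le_measure_noCommonPoint_inter (hX : ∀ i, Measurable (X i))
    (hXpos : ∀ i ω, 0 < X i ω) (hindep : iIndepFun X μ) (hid : ∀ i, IdentDistrib (X i) (X 1) μ μ)
    {T : ℕ → Ω → ℕ} (hT : ∀ m ω, IsGreatest {i | partialSum (X · ω) i ≤ m} (T m ω)) (b : ℕ) :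
    μ {ω | (X 1 ω : ℝ) ≤ n / M}
        * ∑ t ∈ range (n + 1), μ {ω | IsReducedConfig M n b t fun i => X i ω}
      ≤ μ ({ω | NoCommonPoint n (T (n - b) ω) (partialSum (X · ω))
            (fun i => b + (partialSum (X · ω) (T (n - b) ω)
              - partialSum (X · ω) (T (n - b) ω - i)))}
          ∩ {ω | ∀ i ∈ Icc 1 n, (X i ω : ℝ) ≤ n / M}) := by
  have hsmall : MeasurableSet {k : ℕ | (k : ℝ) ≤ n / M} := .of_discrete
  calc _ = ∑ t ∈ range (n + 1), μ ({ω | IsReducedConfig M n b t fun i => X i ω}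
          ∩ X (t + 1) ⁻¹' {k : ℕ | (k : ℝ) ≤ n / M}) := by
        rw [mul_sum]
        exact sum_congr rfl fun t _ => (measure_inter_isReducedConfig_preimage hX hindep hid b t
          {k : ℕ | (k : ℝ) ≤ n / M}).symm
    _ = μ (⋃ t ∈ range (n + 1), {ω | IsReducedConfig M n b t fun i => X i ω}
          ∩ X (t + 1) ⁻¹' {k : ℕ | (k : ℝ) ≤ n / M}) :=
        (measure_biUnion_finset ((pairwiseDisjoint_setOf_isReducedConfig M n hXpos b _).mono
          fun t => Set.inter_subset_left) fun t _ =>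
            (measurableSet_setOf_of_dependsOn hX (isReducedConfig_dependsOn M n b t)).inter
              (hX _ hsmall)).symm
    _ ≤ _ := measure_mono <| Set.iUnion₂_subset fun t _ ω ⟨hred, hlast⟩ => by
        refine ⟨?_, fun i hi => ?_⟩
        · have hTt : T (n - b) ω = t := (hT (n - b) ω).unique (hred.isGreatest (hXpos · ω))
          simpa only [Set.mem_ofPred_eq, hTt] using hred.2.1
        · rcases eq_or_ne i (t + 1) with rfl | hne
          · exact hlast
          · exact hred.2.2 i hi hne

end Renewal

/-- Lemma 2.1 of the paper: there is an `M₀ > 0` such that for all `M ≥ M₀` and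
any i.i.d. positive integer gap sequence with finite mean, the probability that
`{W i}` and `{R i}` have no common point in `[1, n/3]` is bounded by
`(E X + 1) P(Lₙᶜ) + ∑_{b=0}^{⌊n/M⌋} P(X ≥ b+1) P({W i} ∩ {b + W'_{b,i}} ∩ [1,n/3] = ∅, Lₙ)`. -/
theorem stmt7 :
    ∃ M₀ : ℝ, 0 < M₀ ∧ ∀ M : ℝ, M₀ ≤ M →
    ∀ (Ω : Type) [MeasurableSpace Ω] (μ : Measure Ω), IsProbabilityMeasure μ →
    ∀ (X : ℕ → Ω → ℕ),
      (∀ i, Measurable (X i)) →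
      (∀ i ω, 0 < X i ω) →
      iIndepFun X μ →
      (∀ i, IdentDistrib (X i) (X 1) μ μ) →
      Integrable (fun ω => (X 1 ω : ℝ)) μ →
    ∀ (W : ℕ → Ω → ℕ), (∀ m ω, W m ω = ∑ i ∈ Finset.Icc 1 m, X i ω) →
    ∀ (T : ℕ → Ω → ℕ),
      (∀ m ω, W (T m ω) ω ≤ m ∧ ∀ i, W i ω ≤ m → i ≤ T m ω) →
    ∀ n : ℕ, 1 ≤ n →
    ∀ (R : ℕ → Ω → ℕ),
      (∀ i ω, R i ω = n - W (T n ω) ω + ∑ j ∈ Finset.range i, X (T n ω - j) ω) →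
    ∀ (W' : ℕ → ℕ → Ω → ℕ),
      (∀ b i ω, W' b i ω = W (T (n - b) ω) ω - W (T (n - b) ω - i) ω) →
    μ {ω | ∀ i ∈ Finset.Icc 1 (T n ω), ∀ i' ∈ Finset.Icc 1 (T n ω),
        ¬ (W i ω = R i' ω ∧ 1 ≤ W i ω ∧ 3 * W i ω ≤ n)}
      ≤ ENNReal.ofReal ((∫ ω, (X 1 ω : ℝ) ∂μ) + 1)
          * μ ({ω | ∀ i ∈ Finset.Icc 1 n, (X i ω : ℝ) ≤ (n : ℝ) / M}ᶜ)
        + ∑ b ∈ Finset.range (⌊(n : ℝ) / M⌋₊ + 1),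
            μ {ω | b + 1 ≤ X 1 ω}
              * μ ({ω | ∀ i ∈ Finset.Icc 1 (T (n - b) ω), ∀ i' ∈ Finset.Icc 1 (T (n - b) ω),
                    ¬ (W i ω = b + W' b i' ω ∧ 1 ≤ W i ω ∧ 3 * W i ω ≤ n)}
                  ∩ {ω | ∀ i ∈ Finset.Icc 1 n, (X i ω : ℝ) ≤ (n : ℝ) / M}) := by
  refine ⟨1, one_pos, fun M _ Ω _ μ _ X hX hXpos hindep hid hint W hW T hT n hn R hR W' hW' => ?_⟩
  obtain rfl : W = fun m ω => partialSum (X · ω) m := funext₂ hW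
  obtain rfl : R = _ := funext₂ hR
  obtain rfl : W' = _ := funext fun b => funext₂ (hW' b)
  set L := {ω | ∀ i ∈ Finset.Icc 1 n, (X i ω : ℝ) ≤ (n : ℝ) / M}
  have hfirst : 1 - μ {ω | (X 1 ω : ℝ) ≤ n / M} ≤ μ Lᶜ := by
    rw [← prob_compl_eq_one_sub (s := {ω | (X 1 ω : ℝ) ≤ n / M})
      (hX 1 (MeasurableSet.of_discrete (s := {k : ℕ | (k : ℝ) ≤ n / M})))]
    exact measure_mono (Set.compl_subset_compl.2 fun ω hω => hω 1 (Finset.mem_Icc.2 ⟨le_rfl, hn⟩))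
  have hmean : ∑ b ∈ Finset.range (⌊(n : ℝ) / M⌋₊ + 1), μ {ω | b + 1 ≤ X 1 ω}
      ≤ ENNReal.ofReal (∫ ω, (X 1 ω : ℝ) ∂μ) := by
    rw [ofReal_integral_eq_lintegral_ofReal hint (.of_forall fun ω => Nat.cast_nonneg _)]
    simpa only [ENNReal.ofReal_natCast] using sum_measure_add_one_le_le_lintegral (hX 1) _
  rw [ENNReal.ofReal_add (integral_nonneg fun ω => Nat.cast_nonneg _) zero_le_one,
    ENNReal.ofReal_one, add_mul, one_mul, add_right_comm]
  refine (measure_le_inter_add_sdiff μ _ L).trans (add_le_add ?_ (measure_mono fun _ h => h.2))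
  exact (measure_noCommonPoint_inter_le hX hXpos hindep hid (hT n)).trans
    (ENNReal.sum_mul_le_of_mul_le prob_le_one
      (fun b _ => sum_measure_isReducedConfig_le_one M n hX hXpos b _)
      (fun b _ => measure_mul_sum_le_measure_noCommonPoint_inter hX hXpos hindep hid hT b)
      hmean hfirst)
end

section
/- Let {s_i}_{i≥0} be a strictly increasing sequence of positive integers and k ≥ 1 an integer, and suppose gcd({s_i : i ≥ 0}) = gcd({s_i - s_0 : i ≥ 1}). Then {s_i}_{i≥0} is weakly asymptotically k-complete if and only if {s_i - s_0}_{i≥1} is weakly asymptotically ≤k-complete. -/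
/-- Lemma 3.2 of the paper: if `{s i}_{i≥0}` is strictly increasing with positive
entries and `gcd {s i : i ≥ 0} = gcd {s i - s 0 : i ≥ 1}` (expressed via common
divisors), then `{s i}_{i≥0}` is weakly asymptotically `k`-complete iff
`{s i - s 0}_{i≥1}` is weakly asymptotically `≤ k`-complete. -/
theorem stmt13
    (s : ℕ → ℕ)
    (hpos : ∀ i, 0 < s i)
    (hmono : StrictMono s)
    (k : ℕ) (hk : 1 ≤ k)
    (hgcd : ∀ d : ℕ, (∀ i, d ∣ s i) ↔ (∀ i, 1 ≤ i → d ∣ (s i - s 0))) :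
    (∃ N : ℕ, ∀ t : ℕ, N ≤ t →
        ∃ f : Fin k → ℕ, ∑ j, s (f j) = t) ↔
    (∃ N : ℕ, ∀ t : ℕ, N ≤ t →
        ∃ l : ℕ, 1 ≤ l ∧ l ≤ k ∧
          ∃ f : Fin l → ℕ, (∀ j, 1 ≤ f j) ∧ ∑ j, (s (f j) - s 0) = t) := by
  have hle0 : ∀ m : ℕ, s 0 ≤ s m := fun m => hmono.monotone (Nat.zero_le m)
  constructor
  · rintro ⟨N, hN⟩
    refine ⟨N + 1, fun t ht => ?_⟩
    obtain ⟨g, hg⟩ := hN (t + k * s 0) (by omega)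
    -- the set of indices with g j ≥ 1
    set S : Finset (Fin k) := Finset.univ.filter (fun j => 1 ≤ g j) with hS
    have hsumS : ∑ j ∈ S, (s (g j) - s 0) = t := by
      have h1 : ∑ j ∈ S, (s (g j) - s 0) = ∑ j : Fin k, (s (g j) - s 0) := by
        apply Finset.sum_subset (Finset.subset_univ S)
        intro x _ hx
        have : g x = 0 := by
          by_contra h
          exact hx (by simp [hS]; omega)
        simp [this]
      have h2 : ∑ j : Fin k, (s (g j) - s 0) = (∑ j : Fin k, s (g j)) - k * s 0 := by
        rw [Finset.sum_tsub_distrib _ (fun x _ => hle0 (g x))]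
        simp [Finset.sum_const, mul_comm]
      have hge : k * s 0 ≤ ∑ j : Fin k, s (g j) := by
        calc k * s 0 = ∑ _j : Fin k, s 0 := by simp [mul_comm]
        _ ≤ _ := Finset.sum_le_sum (fun x _ => hle0 (g x))
      omega
    set l := S.card with hl
    have hlk : l ≤ k := by
      simpa using Finset.card_le_card (Finset.subset_univ S)
    have hl1 : 1 ≤ l := by
      rcases Nat.eq_zero_or_pos l with h0 | h
      · exfalso
        have : S = ∅ := Finset.card_eq_zero.mp h0
        rw [this] at hsumS
        simp at hsumS
        omega
      · exact h
    refine ⟨l, hl1, hlk, fun i => g (S.equivFin.symm i), ?_, ?_⟩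
    · intro j
      exact (Finset.mem_filter.mp (S.equivFin.symm j).2).2
    · rw [← hsumS, ← Finset.sum_coe_sort S (fun j => s (g j) - s 0)]
      exact Fintype.sum_equiv S.equivFin.symm _ _ (fun _ => rfl)
  · rintro ⟨N, hN⟩
    refine ⟨N + k * s 0, fun t ht => ?_⟩
    obtain ⟨l, hl1, hlk, f, hf1, hfsum⟩ := hN (t - k * s 0) (by omega)
    refine ⟨fun j => if h : (j : ℕ) < l then f ⟨j, h⟩ else 0, ?_⟩
    set F : ℕ → ℕ := fun j => s (if h : j < l then f ⟨j, h⟩ else 0) with hF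
    show ∑ j : Fin k, F ↑j = t
    rw [Fin.sum_univ_eq_sum_range F k, Finset.range_eq_Ico,
      ← Finset.sum_Ico_consecutive _ (Nat.zero_le l) hlk]
    have hA : ∑ j ∈ Finset.Ico 0 l, F j = ∑ j : Fin l, s (f j) := by
      rw [← Finset.range_eq_Ico, ← Fin.sum_univ_eq_sum_range F l]
      apply Finset.sum_congr rfl
      intro j _
      simp only [hF]
      rw [dif_pos j.isLt]
    have hB : ∑ j ∈ Finset.Ico l k, F j = (k - l) * s 0 := by
      rw [Finset.sum_congr rfl (fun j hj => ?_), Finset.sum_const, Nat.card_Ico, smul_eq_mul]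
      simp only [hF]
      rw [dif_neg (by have := (Finset.mem_Ico.mp hj).1; omega)]
    rw [hA, hB]
    have h2 : ∑ j : Fin l, (s (f j) - s 0) = (∑ j : Fin l, s (f j)) - l * s 0 := by
      rw [Finset.sum_tsub_distrib _ (fun x _ => hle0 (f x))]
      simp [Finset.sum_const, mul_comm]
    have hge : l * s 0 ≤ ∑ j : Fin l, s (f j) := by
      calc l * s 0 = ∑ _j : Fin l, s 0 := by simp [mul_comm]
      _ ≤ _ := Finset.sum_le_sum (fun x _ => hle0 (f x))
    rw [h2] at hfsum
    have hkl : (k - l) * s 0 + l * s 0 = k * s 0 := by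
      rw [← Nat.add_mul]; congr 1; omega
    omega
end

section
/- Let k ≥ 1 be an integer and let {X_i}_{i≥1} be i.i.d. positive-integer-valued random variables. For each n ≥ 1 let C^{=k,w}_n be the event that the weight sequence generated by the gaps {X_i}_{i≥n} (i.e., the sequence of partial sums X_n, X_n + X_{n+1}, X_n + X_{n+1} + X_{n+2}, ...) is weakly asymptotically k-complete, and let C^{≤k,w}_n be the event that this weight sequence is weakly asymptotically ≤k-complete. Then for all positive integers n and m, P(C^{=k,w}_m) = P(C^{≤k,w}_n). -/
/-!
For gaps `x`, each weight `x 0 + ⋯ + x j` is `x 0` plus either `0` or a weight of the tail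
`x (· + 1)`, so the sums of exactly `k` weights of `x` are `k * x 0` plus the sums of at most `k`
weights of the tail. Hence `x` is weakly asymptotically `k`-complete iff its tail is weakly
asymptotically `≤ k`-complete, and both events are preimages of one measurable set of sequences
under shifts of `X`. An i.i.d. sequence has the same law as each of its shifts.
-/

open MeasureTheory ProbabilityTheory Filter

def weightSeq (x : ℕ → ℕ) (j : ℕ) : ℕ := ∑ i ∈ Finset.range (j + 1), x i

def IsWeaklyAsymptoticallyComplete (k : ℕ) (a : ℕ → ℕ) : Prop :=
  ∀ᶠ t in atTop, ∃ g : Fin k → ℕ, ∑ j, a (g j) = t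

def IsWeaklyAsymptoticallyAtMostComplete (k : ℕ) (a : ℕ → ℕ) : Prop :=
  ∀ᶠ t in atTop, ∃ l, 1 ≤ l ∧ l ≤ k ∧ ∃ g : Fin l → ℕ, ∑ j, a (g j) = t

theorem exists_sum_eq_iff_exists_le_sum_succ {M : Type*} [AddCommMonoid M] (f : ℕ → M)
    (hf : f 0 = 0) (k : ℕ) (t : M) :
    (∃ g : Fin k → ℕ, ∑ j, f (g j) = t) ↔ ∃ l ≤ k, ∃ g : Fin l → ℕ, ∑ j, f (g j + 1) = t := by
  induction k generalizing t with
  | zero => simp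
  | succ k ih =>
    constructor
    · rintro ⟨g, rfl⟩
      obtain ⟨l, hl, g', hg'⟩ := (ih _).1 ⟨_, rfl⟩
      rw [Fin.sum_univ_succ, ← hg']
      cases h : g 0 with
      | zero => exact ⟨l, hl.trans k.le_succ, g', by rw [hf, zero_add]⟩
      | succ b => exact ⟨l + 1, by omega, Fin.cons b g', by simp [Fin.sum_univ_succ]⟩
    · rintro ⟨l, hl, g, rfl⟩
      cases l with
      | zero => exact ⟨fun _ => 0, by simp [hf]⟩
      | succ l =>
        obtain ⟨g', hg'⟩ := (ih _).2 ⟨l, by omega, Fin.tail g, rfl⟩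
        exact ⟨Fin.cons (g 0 + 1) g', by simp [Fin.sum_univ_succ, hg', Fin.tail]⟩

theorem sum_weightSeq_eq (x : ℕ → ℕ) {k : ℕ} (g : Fin k → ℕ) :
    ∑ j, weightSeq x (g j) = k * x 0 + ∑ j, ∑ i ∈ Finset.range (g j), x (i + 1) := by
  simp [weightSeq, Finset.sum_range_succ', Finset.sum_add_distrib, add_comm]

theorem exists_sum_weightSeq_eq_add_iff (x : ℕ → ℕ) (k t : ℕ) :
    (∃ g : Fin k → ℕ, ∑ j, weightSeq x (g j) = t + k * x 0) ↔
      ∃ l ≤ k, ∃ g : Fin l → ℕ, ∑ j, weightSeq (fun i => x (i + 1)) (g j) = t := by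
  simp only [sum_weightSeq_eq x, add_comm _ (k * x 0), Nat.add_left_cancel_iff]
  exact exists_sum_eq_iff_exists_le_sum_succ (fun n => ∑ i ∈ Finset.range n, x (i + 1))
    (Finset.sum_range_zero _) k t

theorem isWeaklyAsymptoticallyComplete_weightSeq_iff (k : ℕ) (x : ℕ → ℕ) :
    IsWeaklyAsymptoticallyComplete k (weightSeq x) ↔
      IsWeaklyAsymptoticallyAtMostComplete k (weightSeq fun i => x (i + 1)) := by
  unfold IsWeaklyAsymptoticallyComplete IsWeaklyAsymptoticallyAtMostComplete
  rw [← map_add_atTop_eq_nat (k * x 0), eventually_map]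
  simp only [exists_sum_weightSeq_eq_add_iff, map_add_atTop_eq_nat]
  refine eventually_congr ((eventually_ge_atTop 1).mono fun t ht => ?_)
  constructor
  · rintro ⟨l, hl, g, rfl⟩
    exact ⟨l, Nat.pos_of_ne_zero (by rintro rfl; simp at ht), hl, g, rfl⟩
  · rintro ⟨l, -, hl, g, rfl⟩
    exact ⟨l, hl, g, rfl⟩

theorem sum_Icc_eq_weightSeq (x : ℕ → ℕ) {m f : ℕ} (h : m ≤ f) :
    ∑ i ∈ Finset.Icc m f, x i = weightSeq (fun i => x (m + i)) (f - m) := by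
  rw [weightSeq, ← Finset.Ico_add_one_right_eq_Icc, Finset.sum_Ico_eq_sum_range]
  congr 2
  omega

theorem exists_sum_Icc_eq_iff (x : ℕ → ℕ) (k m t : ℕ) :
    (∃ f : Fin k → ℕ, (∀ j, m ≤ f j) ∧ ∑ j, ∑ i ∈ Finset.Icc m (f j), x i = t) ↔
      ∃ g : Fin k → ℕ, ∑ j, weightSeq (fun i => x (m + i)) (g j) = t := by
  constructor
  · rintro ⟨f, hf, rfl⟩
    exact ⟨fun j => f j - m, Finset.sum_congr rfl fun j _ => (sum_Icc_eq_weightSeq x (hf j)).symm⟩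
  · rintro ⟨g, rfl⟩
    refine ⟨fun j => m + g j, fun j => m.le_add_right _, Finset.sum_congr rfl fun j _ => ?_⟩
    rw [sum_Icc_eq_weightSeq x (m.le_add_right _), Nat.add_sub_cancel_left]

theorem measurableSet_isWeaklyAsymptoticallyAtMostComplete_weightSeq (k : ℕ) :
    MeasurableSet {u : ℕ → ℕ | IsWeaklyAsymptoticallyAtMostComplete k (weightSeq u)} := by
  simp only [IsWeaklyAsymptoticallyAtMostComplete, eventually_atTop, weightSeq]
  exact measurableSet_setOfPred.2 (by fun_prop)

theorem ProbabilityTheory.iIndepFun.map_shift_eq {Ω β : Type*} [MeasurableSpace Ω]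
    [MeasurableSpace β] {μ : Measure Ω} {X : ℕ → Ω → β} (hmeas : ∀ i, Measurable (X i))
    (hindep : iIndepFun X μ) (hident : ∀ i j, IdentDistrib (X i) (X j) μ μ) (a b : ℕ) :
    μ.map (fun ω i => X (a + i) ω) = μ.map (fun ω i => X (b + i) ω) := by
  have h (c : ℕ) : μ.map (fun ω i => X (c + i) ω) = Measure.infinitePi fun _ => μ.map (X 0) := by
    rw [(hindep.precomp (add_right_injective c)).map_fun_eq_infinitePi_map fun i => hmeas _]
    simp_rw [(hident _ 0).map_eq]
  rw [h a, h b]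

theorem stmt14_general
    {Ω : Type*} [MeasurableSpace Ω] (μ : Measure Ω)
    (k : ℕ)
    (X : ℕ → Ω → ℕ)
    (hmeas : ∀ i, Measurable (X i))
    (hindep : iIndepFun X μ)
    (hident : ∀ i, IdentDistrib (X i) (X 1) μ μ)
    (n m : ℕ) :
    μ {ω | ∃ N : ℕ, ∀ t : ℕ, N ≤ t →
        ∃ f : Fin k → ℕ, (∀ j, m ≤ f j) ∧
          ∑ j, (∑ i ∈ Finset.Icc m (f j), X i ω) = t}
      = μ {ω | ∃ N : ℕ, ∀ t : ℕ, N ≤ t →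
        ∃ l : ℕ, 1 ≤ l ∧ l ≤ k ∧
          ∃ f : Fin l → ℕ, (∀ j, n ≤ f j) ∧
            ∑ j, (∑ i ∈ Finset.Icc n (f j), X i ω) = t} := by
  set S := {u : ℕ → ℕ | IsWeaklyAsymptoticallyAtMostComplete k (weightSeq u)}
  have hS : MeasurableSet S := measurableSet_isWeaklyAsymptoticallyAtMostComplete_weightSeq k
  have hshift (c : ℕ) : Measurable fun ω i => X (c + i) ω := measurable_pi_lambda _ fun i => hmeas _
  have hexactly : {ω | ∃ N : ℕ, ∀ t : ℕ, N ≤ t →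
      ∃ f : Fin k → ℕ, (∀ j, m ≤ f j) ∧ ∑ j, (∑ i ∈ Finset.Icc m (f j), X i ω) = t} =
        (fun ω i => X (m + 1 + i) ω) ⁻¹' S := by
    ext ω
    simp only [Set.mem_preimage, Set.mem_ofPred_eq, S, add_assoc m 1, add_comm 1]
    refine Iff.trans ?_ (isWeaklyAsymptoticallyComplete_weightSeq_iff k fun i => X (m + i) ω)
    simp only [IsWeaklyAsymptoticallyComplete, eventually_atTop, exists_sum_Icc_eq_iff]
  have hatMost : {ω | ∃ N : ℕ, ∀ t : ℕ, N ≤ t → ∃ l : ℕ, 1 ≤ l ∧ l ≤ k ∧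
      ∃ f : Fin l → ℕ, (∀ j, n ≤ f j) ∧ ∑ j, (∑ i ∈ Finset.Icc n (f j), X i ω) = t} =
        (fun ω i => X (n + i) ω) ⁻¹' S := by
    ext ω
    simp only [Set.mem_preimage, Set.mem_ofPred_eq, S, IsWeaklyAsymptoticallyAtMostComplete,
      eventually_atTop, exists_sum_Icc_eq_iff]
  rw [hexactly, hatMost, ← Measure.map_apply (hshift _) hS, ← Measure.map_apply (hshift _) hS,
    hindep.map_shift_eq hmeas (fun i j => (hident i).trans (hident j).symm)]

/-- Lemma 3.3 of the paper: for i.i.d. positive integer gaps, the probability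
that the weight sequence generated by `{X i}_{i≥m}` is weakly asymptotically
`k`-complete equals the probability that the weight sequence generated by
`{X i}_{i≥n}` is weakly asymptotically `≤ k`-complete, for all `n, m ≥ 1`. -/
theorem stmt14
    {Ω : Type*} [MeasurableSpace Ω] (μ : Measure Ω) [IsProbabilityMeasure μ]
    (k : ℕ) (hk : 1 ≤ k)
    (X : ℕ → Ω → ℕ)
    (hmeas : ∀ i, Measurable (X i))
    (hpos : ∀ i ω, 0 < X i ω)
    (hindep : iIndepFun X μ)
    (hident : ∀ i, IdentDistrib (X i) (X 1) μ μ)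
    (n m : ℕ) (hn : 1 ≤ n) (hm : 1 ≤ m) :
    μ {ω | ∃ N : ℕ, ∀ t : ℕ, N ≤ t →
        ∃ f : Fin k → ℕ, (∀ j, m ≤ f j) ∧
          ∑ j, (∑ i ∈ Finset.Icc m (f j), X i ω) = t}
      = μ {ω | ∃ N : ℕ, ∀ t : ℕ, N ≤ t →
        ∃ l : ℕ, 1 ≤ l ∧ l ≤ k ∧
          ∃ f : Fin l → ℕ, (∀ j, n ≤ f j) ∧
            ∑ j, (∑ i ∈ Finset.Icc n (f j), X i ω) = t} :=
  stmt14_general μ k X hmeas hindep hident n m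
end
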